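/- arXiv:0712.0312 — 3 statements merged into one kernel-verified Lean document; each statement's English description precedes it below -/
import Mathlib

section
/- For all real t₁, t₂, one has 1 - cos(t₁ + t₂) ≤ 5·((1 - cos t₁) + (1 - cos t₂)). -/
theorem one_sub_cos_add_le (t₁ t₂ : ℝ) :
    1 - Real.cos (t₁ + t₂) ≤ 5 * ((1 - Real.cos t₁) + (1 - Real.cos t₂)) := by
  have h := Real.cos_add t₁ t₂
  have h1 := Real.sin_sq_add_cos_sq t₁
  have h2 := Real.sin_sq_add_cos_sq t₂
  have d1 := Real.cos_le_one t₁
  have d2 := Real.cos_le_one t₂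
  nlinarith [sq_nonneg (Real.sin t₁ - Real.sin t₂),
    mul_nonneg (by linarith : (0:ℝ) ≤ 2 - (Real.cos t₁ + Real.cos t₂))
      (by linarith : (0:ℝ) ≤ 8 - (Real.cos t₁ + Real.cos t₂))]
end

section
/- For every natural number N ≥ 1 and reals t₀, t₁, …, t_N with t = t₀ + t₁ + ⋯ + t_N, one has 1 - cos(t) ≤ (2N + 3)·∑_{n=0}^{N} (1 - cos t_n). -/
lemma abs_sin_sum_le {ι : Type*} (s : Finset ι) (x : ι → ℝ) :
    |Real.sin (∑ i ∈ s, x i)| ≤ ∑ i ∈ s, |Real.sin (x i)| := by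
  classical
  induction s using Finset.induction_on with
  | empty => simp
  | @insert a s hi ih =>
    rw [Finset.sum_insert hi, Finset.sum_insert hi, Real.sin_add]
    calc |Real.sin (x a) * Real.cos (∑ i ∈ s, x i) +
            Real.cos (x a) * Real.sin (∑ i ∈ s, x i)|
        ≤ |Real.sin (x a) * Real.cos (∑ i ∈ s, x i)| +
            |Real.cos (x a) * Real.sin (∑ i ∈ s, x i)| := abs_add_le _ _
      _ ≤ |Real.sin (x a)| * 1 + 1 * |Real.sin (∑ i ∈ s, x i)| := by
          rw [abs_mul, abs_mul]
          gcongr <;> first | exact Real.abs_cos_le_one _ | positivity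
      _ ≤ |Real.sin (x a)| + ∑ i ∈ s, |Real.sin (x i)| := by
          rw [mul_one, one_mul]; gcongr

lemma one_sub_cos_eq (x : ℝ) : 1 - Real.cos x = 2 * Real.sin (x / 2) ^ 2 := by
  have h := Real.cos_two_mul (x / 2)
  have h2 : Real.sin (x / 2) ^ 2 + Real.cos (x / 2) ^ 2 = 1 := Real.sin_sq_add_cos_sq _
  have : 2 * (x / 2) = x := by ring
  rw [this] at h
  nlinarith [h, h2]

theorem one_sub_cos_sum_le (N : ℕ) (hN : 1 ≤ N) (t : Fin (N + 1) → ℝ) :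
    1 - Real.cos (∑ n, t n) ≤ (2 * (N : ℝ) + 3) * ∑ n, (1 - Real.cos (t n)) := by
  have key : (∑ n, |Real.sin (t n / 2)|) ^ 2
      ≤ ((N : ℝ) + 1) * ∑ n, Real.sin (t n / 2) ^ 2 := by
    have := sq_sum_le_card_mul_sum_sq (s := (Finset.univ : Finset (Fin (N + 1))))
      (f := fun n => |Real.sin (t n / 2)|)
    simpa [sq_abs] using this
  have habs : |Real.sin ((∑ n, t n) / 2)| ≤ ∑ n, |Real.sin (t n / 2)| := by
    rw [Finset.sum_div]
    exact abs_sin_sum_le _ _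
  have hsq : Real.sin ((∑ n, t n) / 2) ^ 2 ≤ ((N : ℝ) + 1) * ∑ n, Real.sin (t n / 2) ^ 2 := by
    calc Real.sin ((∑ n, t n) / 2) ^ 2 = |Real.sin ((∑ n, t n) / 2)| ^ 2 := (sq_abs _).symm
      _ ≤ (∑ n, |Real.sin (t n / 2)|) ^ 2 := by
          have h0 : (0:ℝ) ≤ |Real.sin ((∑ n, t n) / 2)| := abs_nonneg _
          exact pow_le_pow_left₀ h0 habs 2
      _ ≤ _ := key
  have hrw : ∑ n, (1 - Real.cos (t n)) = 2 * ∑ n, Real.sin (t n / 2) ^ 2 := by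
    rw [Finset.mul_sum]
    exact Finset.sum_congr rfl fun n _ => one_sub_cos_eq (t n)
  have hnn : (0:ℝ) ≤ ∑ n, Real.sin (t n / 2) ^ 2 := by positivity
  rw [one_sub_cos_eq, hrw]
  nlinarith [hsq, hnn, (by exact_mod_cast hN : (1:ℝ) ≤ (N:ℝ))]
end

section
/- Suppose (a_k)_{k≥1} is a nonnegative sequence with partial tails T(n) = ∑_{k=n}^∞ a_k ≤ 1, and define M(h) = ∑_{k=1}^∞ (1 - e^{-k h})·a_k. Assume there are constants 0 < c ≤ C such that c/√n ≤ M(1/n) ≤ C/√n for all n ≥ 1, and that T(n) ≤ C̃/√n with C̃ = (1-e^{-1})^{-1}C. Then for every ε > 0 with c√ε - 2εC(1-e^{-1})^{-1} > 0, one has T(n) ≥ (c√ε - 2εC(1-e^{-1})^{-1})/√n for all n ≥ 1. -/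
/-!
Take `h = 1/m` with `m = ⌈n/ε⌉`. Splitting `M h` at `n`, the tail is at most `T n`, while
`1 - e^{-kh} ≤ kh` and Abel summation bound the head by `h ∑_{k<n} k a_k ≤ h ∑_{0<l<n} T l`,
which the assumed decay `T l ≤ C̃/√l` makes at most `2 h C̃ √(n-1)`. Hence
`T n ≥ c/√m - 2 C̃ √(n-1)/m`, and it remains to absorb the rounding of `n/ε` up to `m`.
-/

open Finset Real

lemma tsum_subtype_le_eq_tsum_add {α : Type*} [AddCommMonoid α] [TopologicalSpace α]
    (f : ℕ → α) (n : ℕ) : ∑' k : {k : ℕ // n ≤ k}, f k = ∑' k, f (k + n) :=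
  (Equiv.tsum_eq (⟨fun k => ⟨k + n, Nat.le_add_left n k⟩, fun k => k - n,
    fun k => by simp, fun k => Subtype.ext (Nat.sub_add_cancel k.2)⟩ : ℕ ≃ {k : ℕ // n ≤ k})
    (fun k => f k)).symm

lemma sum_range_succ_nsmul_eq_sum_sum_Ico {M : Type*} [AddCommMonoid M] (a : ℕ → M) (n : ℕ) :
    ∑ k ∈ range (n + 1), k • a k = ∑ l ∈ range n, ∑ k ∈ Ico (l + 1) (n + 1), a k := by
  induction n with
  | zero => simp
  | succ n ih =>
    have hsplit : ∀ l ∈ range (n + 1),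
        ∑ k ∈ Ico (l + 1) (n + 1 + 1), a k = ∑ k ∈ Ico (l + 1) (n + 1), a k + a (n + 1) :=
      fun l hl => sum_Ico_succ_top (by simpa using hl) a
    rw [sum_range_succ, ih, sum_congr rfl hsplit, sum_add_distrib,
      sum_range_succ (fun l => ∑ k ∈ Ico (l + 1) (n + 1), a k), Ico_self, sum_empty, add_zero,
      sum_const, card_range]

namespace Real

lemma sqrt_le_sqrt_add_sub_div {x y : ℝ} (hx : 0 < x) (hy : 0 ≤ y) :
    √y ≤ √x + (y - x) / (2 * √x) := by
  have hsx : 0 < √x := sqrt_pos.2 hx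
  rw [← sub_le_iff_le_add', le_div_iff₀ (by positivity)]
  nlinarith [sq_sqrt hx.le, sq_sqrt hy, sq_nonneg (√x - √y)]

lemma sum_range_one_div_sqrt_succ_le (N : ℕ) :
    ∑ l ∈ range N, 1 / √(l + 1) ≤ 2 * √N := by
  have hstep : ∀ l ∈ range N, 1 / √((l : ℝ) + 1) ≤ 2 * √((l + 1 : ℕ) : ℝ) - 2 * √(l : ℕ) := by
    intro l _
    have hl : (0 : ℝ) < l + 1 := by positivity
    have htan := sqrt_le_sqrt_add_sub_div hl (Nat.cast_nonneg l)
    have hs : 0 < √((l : ℝ) + 1) := sqrt_pos.2 hl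
    have hrw : ((l : ℝ) - (l + 1)) / (2 * √((l : ℝ) + 1)) = -(1 / √((l : ℝ) + 1)) / 2 := by
      field_simp; ring
    push_cast
    linarith
  calc ∑ l ∈ range N, 1 / √(l + 1)
      ≤ ∑ l ∈ range N, (2 * √((l + 1 : ℕ) : ℝ) - 2 * √(l : ℕ)) := sum_le_sum hstep
    _ = 2 * √N := by rw [sum_range_sub (fun l => 2 * √(l : ℝ))]; simp

lemma one_div_sqrt_sub_le_one_div_sqrt_add {x δ : ℝ} (hx : 0 < x) (hδ : 0 ≤ δ) :
    1 / √x - δ / (2 * x * √x) ≤ 1 / √(x + δ) := by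
  have hsx : 0 < √x := sqrt_pos.2 hx
  have hsxd : 0 < √(x + δ) := sqrt_pos.2 (by linarith)
  have htan := sqrt_le_sqrt_add_sub_div hx (by linarith : 0 ≤ x + δ)
  have hmono : √x ≤ √(x + δ) := sqrt_le_sqrt (by linarith)
  rw [add_sub_cancel_left] at htan
  have hxs : x = √x * √x := (mul_self_sqrt hx.le).symm
  have key : 1 / √x - 1 / √(x + δ) ≤ δ / (2 * x * √x) :=
    calc 1 / √x - 1 / √(x + δ) = (√(x + δ) - √x) / (√x * √(x + δ)) := by field_simp
      _ ≤ (√(x + δ) - √x) / (√x * √x) := by gcongr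
      _ ≤ δ / (2 * √x) / (√x * √x) := by gcongr; linarith
      _ = δ / (2 * x * √x) := by rw [← hxs]; field_simp
  linarith

end Real

lemma sum_range_succ_mul_le_of_tsum_tail_le {a : ℕ → ℝ} (hpos : ∀ k, 0 ≤ a k) (hsum : Summable a)
    {K : ℝ} (htail : ∀ l, 1 ≤ l → ∑' k, a (k + l) ≤ K / √l) (N : ℕ) :
    ∑ k ∈ range (N + 1), (k : ℝ) * a k ≤ 2 * K * √N := by
  have hK : 0 ≤ K := by simpa using (tsum_nonneg fun k => hpos (k + 1)).trans (htail 1 le_rfl)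
  have hIco : ∀ l, ∑ k ∈ Ico (l + 1) (N + 1), a k ≤ ∑' k, a (k + (l + 1)) := by
    intro l
    rw [sum_Ico_eq_sum_range]
    simp only [add_comm (l + 1)]
    exact ((summable_nat_add_iff _).2 hsum).sum_le_tsum _ fun i _ => hpos _
  calc ∑ k ∈ range (N + 1), (k : ℝ) * a k = ∑ l ∈ range N, ∑ k ∈ Ico (l + 1) (N + 1), a k := by
        simpa only [nsmul_eq_mul] using sum_range_succ_nsmul_eq_sum_sum_Ico a N
    _ ≤ ∑ l ∈ range N, K * (1 / √((l : ℝ) + 1)) := by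
        gcongr with l
        exact (hIco l).trans ((htail (l + 1) (by omega)).trans_eq (by push_cast; ring))
    _ ≤ K * (2 * √N) := by rw [← mul_sum]; gcongr; exact sum_range_one_div_sqrt_succ_le N
    _ = 2 * K * √N := by ring

lemma tsum_one_sub_exp_mul_le {a : ℕ → ℝ} (hpos : ∀ k, 0 ≤ a k) (hsum : Summable a) {h : ℝ}
    (hh : 0 ≤ h) (n : ℕ) :
    ∑' k : ℕ, (1 - exp (-(k : ℝ) * h)) * a k ≤
      h * ∑ k ∈ range n, (k : ℝ) * a k + ∑' k, a (k + n) := by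
  set f : ℕ → ℝ := fun k => (1 - exp (-(k : ℝ) * h)) * a k
  have hf0 : ∀ k, 0 ≤ f k := fun k =>
    mul_nonneg (sub_nonneg.2 (exp_le_one_iff.2
      (mul_nonpos_of_nonpos_of_nonneg (neg_nonpos.2 k.cast_nonneg) hh))) (hpos k)
  have hfa : ∀ k, f k ≤ a k := fun k =>
    mul_le_of_le_one_left (hpos k) (by linarith [exp_pos (-(k : ℝ) * h)])
  have hf : Summable f := hsum.of_nonneg_of_le hf0 hfa
  rw [← hf.sum_add_tsum_nat_add n, mul_sum]
  refine add_le_add (sum_le_sum fun k _ => ?_) (((summable_nat_add_iff n).2 hf).tsum_le_tsum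
    (fun k => hfa (k + n)) ((summable_nat_add_iff n).2 hsum))
  calc f k ≤ (k * h) * a k :=
        mul_le_mul_of_nonneg_right (by linarith [add_one_le_exp (-(k : ℝ) * h)]) (hpos k)
    _ = h * (k * a k) := by ring

lemma sub_div_sqrt_le_div_sqrt_sub_div {c K ε x m : ℝ} (hc : 0 ≤ c) (hK : 0 ≤ K) (hε : 0 < ε)
    (hcK : c * √ε ≤ 2 * K) (hx : 1 ≤ x) (hm₁ : x / ε ≤ m) (hm₂ : m ≤ x / ε + 1) :
    (c * √ε - 2 * ε * K) / √x ≤ c / √m - 2 * K * √(x - 1) / m := by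
  have hx0 : 0 < x := by linarith
  have hm0 : 0 < m := (div_pos hx0 hε).trans_le hm₁
  have hmx : ε * m ≤ x + ε := by rwa [← le_div_iff₀' hε, add_div, div_self hε.ne']
  have hfirst : c * √ε / √(x + ε) ≤ c / √m := by
    rw [div_le_div_iff₀ (sqrt_pos.2 (by linarith)) (sqrt_pos.2 hm0), mul_assoc, ← sqrt_mul hε.le]
    gcongr
  -- Rounding `m` up costs at most `c √ε ε/(2 x √x)` in the first term; since `c √ε ≤ 2K`,
  -- this is repaid by `√(x - 1) ≤ √x - 1/(2√x)` in the second.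
  have hhead : c * √ε / √x ≤ c / √m + K * ε / (x * √x) :=
    calc c * √ε / √x = c * √ε * (1 / √x) := by ring
      _ ≤ c * √ε * (1 / √(x + ε) + ε / (2 * x * √x)) := by
          gcongr; linarith [one_div_sqrt_sub_le_one_div_sqrt_add hx0 hε.le]
      _ = c * √ε / √(x + ε) + c * √ε * ε / (2 * x * √x) := by ring
      _ ≤ c / √m + 2 * K * ε / (2 * x * √x) := by gcongr
      _ = c / √m + K * ε / (x * √x) := by field_simp
  have htail : 2 * K * √(x - 1) / m ≤ 2 * K * ε / √x - K * ε / (x * √x) :=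
    calc 2 * K * √(x - 1) / m ≤ 2 * K * √(x - 1) / (x / ε) := by gcongr
      _ = 2 * K * ε * √(x - 1) / x := by field_simp
      _ ≤ 2 * K * ε * (√x + (x - 1 - x) / (2 * √x)) / x := by
          gcongr; exact sqrt_le_sqrt_add_sub_div hx0 (by linarith)
      _ = 2 * K * ε / √x - K * ε / (x * √x) := by field_simp; rw [sq_sqrt hx0.le]; ring
  have hsplit : (c * √ε - 2 * ε * K) / √x = c * √ε / √x - 2 * K * ε / √x := by ring
  linarith

theorem tail_lower_bound_from_magnetization_general (a : ℕ → ℝ)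
    (hpos : ∀ k, 0 ≤ a k) (hsum : Summable a)
    (T : ℕ → ℝ) (hT : ∀ n, T n = ∑' k : {k : ℕ // n ≤ k}, a k.1)
    (M : ℝ → ℝ)
    (hM : ∀ h : ℝ, M h = ∑' k : ℕ, (1 - Real.exp (-(k : ℝ) * h)) * a k)
    (c C : ℝ) (hc : 0 < c) (hcC : c ≤ C)
    (hMlow : ∀ n : ℕ, 1 ≤ n → c / Real.sqrt n ≤ M (1 / n))
    (hTup : ∀ n : ℕ, 1 ≤ n → T n ≤ (1 - Real.exp (-1))⁻¹ * C / Real.sqrt n) :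
    ∀ ε : ℝ, 0 < ε →
      0 < c * Real.sqrt ε - 2 * ε * C * (1 - Real.exp (-1))⁻¹ →
      ∀ n : ℕ, 1 ≤ n →
        (c * Real.sqrt ε - 2 * ε * C * (1 - Real.exp (-1))⁻¹) / Real.sqrt n ≤ T n := by
  intro ε hε hgap n hn
  obtain ⟨N, rfl⟩ : ∃ N, n = N + 1 := ⟨n - 1, by omega⟩
  set K := (1 - exp (-1))⁻¹ * C
  have hcK : c ≤ K := hcC.trans (le_mul_of_one_le_left (hc.trans_le hcC).le
    ((one_le_inv₀ (by simp)).2 (by linarith [exp_pos (-1)])))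
  have hgapK : 2 * ε * K < c * √ε := by linarith
  have hcε : c * √ε ≤ 2 * K := by
    have hs : 0 < √ε := sqrt_pos.2 hε
    have hhalf : √ε < 1 / 2 := by
      nlinarith [sq_sqrt hε.le, mul_pos (hc.trans_le hcK) hs]
    nlinarith
  have htail : ∀ l, 1 ≤ l → ∑' k, a (k + l) ≤ K / √l := fun l hl => by
    rw [← tsum_subtype_le_eq_tsum_add, ← hT]; exact hTup l hl
  set m : ℕ := ⌈((N + 1 : ℕ) : ℝ) / ε⌉₊
  have hm : 1 ≤ m := Nat.one_le_ceil_iff.2 (by positivity)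
  have hTm : c / √m - 2 * K * √N / m ≤ T (N + 1) := by
    have hMm : M (1 / m) ≤ 1 / m * (2 * K * √N) + T (N + 1) := by
      rw [hM, hT, tsum_subtype_le_eq_tsum_add]
      refine (tsum_one_sub_exp_mul_le hpos hsum (by positivity) (N + 1)).trans ?_
      gcongr
      exact sum_range_succ_mul_le_of_tsum_tail_le hpos hsum htail N
    linarith [hMlow m hm, one_div_mul_eq_div (m : ℝ) (2 * K * √N)]
  calc (c * √ε - 2 * ε * C * (1 - exp (-1))⁻¹) / √((N + 1 : ℕ) : ℝ)
      = (c * √ε - 2 * ε * K) / √((N + 1 : ℕ) : ℝ) := by ring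
    _ ≤ c / √m - 2 * K * √(((N + 1 : ℕ) : ℝ) - 1) / m :=
        sub_div_sqrt_le_div_sqrt_sub_div hc.le (hc.le.trans hcK) hε hcε (by norm_cast)
          (Nat.le_ceil _) (Nat.ceil_lt_add_one (by positivity)).le
    _ ≤ T (N + 1) := by simpa using hTm

theorem tail_lower_bound_from_magnetization (a : ℕ → ℝ)
    (ha0 : a 0 = 0) (hpos : ∀ k, 0 ≤ a k) (hsum : Summable a)
    (T : ℕ → ℝ) (hT : ∀ n, T n = ∑' k : {k : ℕ // n ≤ k}, a k.1)
    (hT1 : ∀ n : ℕ, 1 ≤ n → T n ≤ 1)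
    (M : ℝ → ℝ)
    (hM : ∀ h : ℝ, M h = ∑' k : ℕ, (1 - Real.exp (-(k : ℝ) * h)) * a k)
    (c C : ℝ) (hc : 0 < c) (hcC : c ≤ C)
    (hMlow : ∀ n : ℕ, 1 ≤ n → c / Real.sqrt n ≤ M (1 / n))
    (hMup : ∀ n : ℕ, 1 ≤ n → M (1 / n) ≤ C / Real.sqrt n)
    (hTup : ∀ n : ℕ, 1 ≤ n → T n ≤ (1 - Real.exp (-1))⁻¹ * C / Real.sqrt n) :
    ∀ ε : ℝ, 0 < ε →
      0 < c * Real.sqrt ε - 2 * ε * C * (1 - Real.exp (-1))⁻¹ →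
      ∀ n : ℕ, 1 ≤ n →
        (c * Real.sqrt ε - 2 * ε * C * (1 - Real.exp (-1))⁻¹) / Real.sqrt n ≤ T n :=
  tail_lower_bound_from_magnetization_general a hpos hsum T hT M hM c C hc hcC hMlow hTup
end
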